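/- Fix integers ℓ ≥ 2 and p ≥ 2, and suppose ℓ divides n+1. Then any two distinct elements of supp(n) differ by at least 2ℓ. -/

import Mathlib

/-!
Every summand `n_i·p^{(i)}` of `n + 1` is a multiple of `ℓ`: for `i ≥ 1` because `ℓ ∣ p^{(i)}`,
and for `i = 0` because `n_0 = (n + 1) % ℓ = 0`. Moreover the digits below the leading one sum
to `(n + 1) % p^{(r)} < p^{(r)} ≤ n_r·p^{(r)}`, so twice that sum is at most `n` and no truncated
subtraction occurs in `n[S]`. Hence every `n[S]` is congruent to `n` modulo `2ℓ`, and distinct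
elements of `supp(n)` are at least `2ℓ` apart.
-/

/-- `p^{(i)}`: `p^{(0)} = 1` and `p^{(i)} = ℓ·p^{i−1}` for `i ≥ 1`. -/
def plpow (ℓ p i : ℕ) : ℕ := if i = 0 then 1 else ℓ * p ^ (i - 1)

/-- The `i`-th `(ℓ,p)`-digit of `N`, so that `N = ∑ i, pldig ℓ p N i * plpow ℓ p i`
with `0 ≤ N_0 < ℓ` and `0 ≤ N_i < p` for `i ≥ 1`. -/
def pldig (ℓ p N i : ℕ) : ℕ := if i = 0 then N % ℓ else (N / ℓ / p ^ (i - 1)) % p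

/-- `n[S] = n − 2·∑_{i ∈ S} n_i·p^{(i)}`, where `n_i` are the `(ℓ,p)`-digits of `n+1`. -/
def nSub (ℓ p n : ℕ) (S : Finset ℕ) : ℕ :=
  n - 2 * ∑ i ∈ S, pldig ℓ p (n + 1) i * plpow ℓ p i

open Finset

section Digits

variable {ℓ p : ℕ}

theorem plpow_succ (t : ℕ) :
    plpow ℓ p (t + 1) = plpow ℓ p t * if t = 0 then ℓ else p := by
  rcases t with _ | s
  · simp [plpow]
  · simp [plpow, pow_succ, mul_assoc]

theorem pldig_eq_div_plpow_mod (N t : ℕ) :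
    pldig ℓ p N t = N / plpow ℓ p t % if t = 0 then ℓ else p := by
  rcases t with _ | s
  · simp [pldig, plpow]
  · simp [pldig, plpow, Nat.div_div_eq_div_mul]

theorem sum_range_pldig_mul_plpow (N t : ℕ) :
    ∑ i ∈ range t, pldig ℓ p N i * plpow ℓ p i = N % plpow ℓ p t := by
  induction t with
  | zero => simp [plpow, Nat.mod_one]
  | succ t ih =>
    rw [sum_range_succ, ih, plpow_succ, Nat.mod_mul, pldig_eq_div_plpow_mod, mul_comm]

theorem plpow_pos (hℓ : 0 < ℓ) (hp : 0 < p) (i : ℕ) : 0 < plpow ℓ p i := by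
  unfold plpow
  split_ifs <;> positivity

theorem two_mul_sum_range_pldig_mul_plpow_lt {N r : ℕ} (hℓ : 0 < ℓ) (hp : 0 < p)
    (hr : pldig ℓ p N r ≠ 0) :
    2 * ∑ i ∈ range r, pldig ℓ p N i * plpow ℓ p i < N := by
  have hlow : ∑ i ∈ range r, pldig ℓ p N i * plpow ℓ p i < plpow ℓ p r := by
    rw [sum_range_pldig_mul_plpow]
    exact Nat.mod_lt _ (plpow_pos hℓ hp r)
  have htop : plpow ℓ p r ≤ pldig ℓ p N r * plpow ℓ p r :=
    Nat.le_mul_of_pos_left _ (Nat.pos_of_ne_zero hr)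
  have hall : ∑ i ∈ range (r + 1), pldig ℓ p N i * plpow ℓ p i ≤ N := by
    rw [sum_range_pldig_mul_plpow]
    exact Nat.mod_le _ _
  rw [sum_range_succ] at hall
  omega

theorem dvd_pldig_mul_plpow {N : ℕ} (hN : ℓ ∣ N) (i : ℕ) : ℓ ∣ pldig ℓ p N i * plpow ℓ p i := by
  rcases i with _ | s
  · simp [pldig, Nat.mod_eq_zero_of_dvd hN]
  · exact Dvd.dvd.mul_left (by simp [plpow]) _

end Digits

theorem nSub_modEq {ℓ p n r : ℕ} (hp : 0 < p) (hdvd : ℓ ∣ n + 1)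
    (hr : pldig ℓ p (n + 1) r ≠ 0) {S : Finset ℕ} (hS : S ⊆ range r) :
    nSub ℓ p n S ≡ n [MOD 2 * ℓ] := by
  have hℓ : 0 < ℓ := Nat.pos_of_dvd_of_pos hdvd n.succ_pos
  have hle : 2 * ∑ i ∈ S, pldig ℓ p (n + 1) i * plpow ℓ p i ≤ n := by
    have := two_mul_sum_range_pldig_mul_plpow_lt hℓ hp hr
    have := sum_le_sum_of_subset (f := fun i => pldig ℓ p (n + 1) i * plpow ℓ p i) hS
    omega
  rw [nSub, Nat.modEq_iff_dvd' (Nat.sub_le _ _), Nat.sub_sub_self hle]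
  exact mul_dvd_mul_left 2 (dvd_sum fun i _ => dvd_pldig_mul_plpow hdvd i)

theorem supp_gap_of_dvd_general (ℓ p n r : ℕ) (hp : 2 ≤ p)
    (hdvd : ℓ ∣ (n + 1))
    (hr : pldig ℓ p (n + 1) r ≠ 0) :
    ∀ S₁ S₂ : Finset ℕ, S₁ ⊆ Finset.range r → S₂ ⊆ Finset.range r →
      nSub ℓ p n S₁ ≠ nSub ℓ p n S₂ →
      (2 * ℓ : ℤ) ≤ |(nSub ℓ p n S₁ : ℤ) - (nSub ℓ p n S₂ : ℤ)| := by
  intro S₁ S₂ hS₁ hS₂ hne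
  have hmod : nSub ℓ p n S₂ ≡ nSub ℓ p n S₁ [MOD 2 * ℓ] :=
    (nSub_modEq (by omega) hdvd hr hS₂).trans (nSub_modEq (by omega) hdvd hr hS₁).symm
  have hsub : (nSub ℓ p n S₁ : ℤ) - nSub ℓ p n S₂ ≠ 0 := sub_ne_zero.mpr (by exact_mod_cast hne)
  exact_mod_cast Int.le_of_dvd (abs_pos.mpr hsub) ((dvd_abs _ _).mpr hmod.dvd)

/-- If `ℓ ∣ n+1`, then any two distinct elements of `supp(n)` differ by at
least `2ℓ`. -/
theorem supp_gap_of_dvd (ℓ p n r : ℕ) (hℓ : 2 ≤ ℓ) (hp : 2 ≤ p)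
    (hdvd : ℓ ∣ (n + 1))
    (hr : pldig ℓ p (n + 1) r ≠ 0)
    (htop : ∀ i, r < i → pldig ℓ p (n + 1) i = 0) :
    ∀ S₁ S₂ : Finset ℕ, S₁ ⊆ Finset.range r → S₂ ⊆ Finset.range r →
      nSub ℓ p n S₁ ≠ nSub ℓ p n S₂ →
      (2 * ℓ : ℤ) ≤ |(nSub ℓ p n S₁ : ℤ) - (nSub ℓ p n S₂ : ℤ)| :=
  supp_gap_of_dvd_general ℓ p n r hp hdvd hr
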